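/- For a statistical manifold (M, g, ∇), the statistical curvature tensor S = (R + R*)/2 (as a (0,4)-tensor) satisfies all four Riemannian curvature symmetries: (a) S(X,Y,Z,W) + S(Y,Z,X,W) + S(Z,X,Y,W) = 0; (b) S(X,Y,Z,W) = −S(Y,X,Z,W); (c) S(X,Y,Z,W) = −S(X,Y,W,Z); (d) S(X,Y,Z,W) = S(Z,W,X,Y). -/
import Mathlib


open scoped BigOperators

namespace StatMfd

/-- Vector fields on an "abstract manifold": derivations of the algebra `A`
of smooth functions. -/
abbrev VF (A : Type*) [CommRing A] [Algebra ℝ A] := Derivation ℝ A A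

variable {A : Type*} [CommRing A] [Algebra ℝ A]

/-- An affine connection on vector fields. -/
structure Conn (A : Type*) [CommRing A] [Algebra ℝ A] where
  D : VF A → VF A → VF A
  add_left : ∀ X Y Z, D (X + Y) Z = D X Z + D Y Z
  smul_left : ∀ (f : A) (X Y), D (f • X) Y = f • D X Y
  add_right : ∀ X Y Z, D X (Y + Z) = D X Y + D X Z
  leibniz : ∀ (f : A) (X Y), D X (f • Y) = f • D X Y + (X f) • Y

/-- A pseudo-Riemannian metric: a symmetric nondegenerate `A`-bilinear form. -/
structure Metric (A : Type*) [CommRing A] [Algebra ℝ A] where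
  g : VF A → VF A → A
  add_left : ∀ X Y Z, g (X + Y) Z = g X Z + g Y Z
  smul_left : ∀ (f : A) (X Y), g (f • X) Y = f * g X Y
  symm : ∀ X Y, g X Y = g Y X
  nondeg : ∀ X, (∀ Y, g X Y = 0) → X = 0

/-- The connection `∇` is torsion free. -/
def TorsionFree (C : Conn A) : Prop := ∀ X Y, C.D X Y - C.D Y X = ⁅X, Y⁆

/-- The cubic form `C(X,Y,Z) = (∇_X g)(Y,Z)`. -/
def cubic (gm : Metric A) (C : Conn A) (X Y Z : VF A) : A :=
  X (gm.g Y Z) - gm.g (C.D X Y) Z - gm.g Y (C.D X Z)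

/-- Total symmetry of a `(0,3)`-tensor (valued in `A` or in vector fields). -/
def TotSym3 {B : Type*} (T : VF A → VF A → VF A → B) : Prop :=
  (∀ X Y Z, T X Y Z = T Y X Z) ∧ (∀ X Y Z, T X Y Z = T X Z Y)

/-- Total symmetry of a `(0,4)`-tensor. -/
def TotSym4 (T : VF A → VF A → VF A → VF A → A) : Prop :=
  (∀ X Y Z W, T X Y Z W = T Y X Z W) ∧ (∀ X Y Z W, T X Y Z W = T X Z Y W) ∧
    (∀ X Y Z W, T X Y Z W = T X Y W Z)

/-- `(g, ∇)` is a statistical structure. -/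
def IsStatistical (gm : Metric A) (C : Conn A) : Prop :=
  TorsionFree C ∧ TotSym3 (cubic gm C)

/-- `∇*` is the dual connection of `∇` with respect to `g`. -/
def IsDual (gm : Metric A) (C Cs : Conn A) : Prop :=
  ∀ X Y Z, X (gm.g Y Z) = gm.g (C.D X Y) Z + gm.g Y (Cs.D X Z)

/-- `h` is the Levi-Civita connection of `g`. -/
def IsLeviCivita (gm : Metric A) (h : Conn A) : Prop :=
  TorsionFree h ∧ ∀ X Y Z, X (gm.g Y Z) = gm.g (h.D X Y) Z + gm.g Y (h.D X Z)

/-- The difference tensor `K(X,Y) = ∇_X Y − ∇̂_X Y`. -/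
def Kdiff (C h : Conn A) (X Y : VF A) : VF A := C.D X Y - h.D X Y

/-- The curvature tensor of a connection. -/
def curv (C : Conn A) (X Y Z : VF A) : VF A :=
  C.D X (C.D Y Z) - C.D Y (C.D X Z) - C.D ⁅X, Y⁆ Z

/-- `(∇_X K)(Y,Z)` for a `(1,2)`-tensor `K`. -/
def covK (C : Conn A) (K : VF A → VF A → VF A) (X Y Z : VF A) : VF A :=
  C.D X (K Y Z) - K (C.D X Y) Z - K Y (C.D X Z)

/-- `(∇_X T)(Y,Z,W)` for a `(0,3)`-tensor `T`. -/
def covC (C : Conn A) (T : VF A → VF A → VF A → A) (X Y Z W : VF A) : A :=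
  X (T Y Z W) - T (C.D X Y) Z W - T Y (C.D X Z) W - T Y Z (C.D X W)

/-- `(∇_X T)(Y,Z)` for a `(0,2)`-tensor `T`. -/
def cov2 (C : Conn A) (T : VF A → VF A → A) (X Y Z : VF A) : A :=
  X (T Y Z) - T (C.D X Y) Z - T Y (C.D X Z)

/-- `(∇_X R)(Y,Z)W` for the curvature tensor of a connection. -/
def covR (C : Conn A) (X Y Z W : VF A) : VF A :=
  C.D X (curv C Y Z W) - curv C (C.D X Y) Z W - curv C Y (C.D X Z) W
    - curv C Y Z (C.D X W)

/-- A global frame of vector fields together with its dual coframe. -/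
structure Frame (A : Type*) [CommRing A] [Algebra ℝ A] (n : ℕ) where
  e : Fin n → VF A
  ε : Fin n → VF A → A
  ε_add : ∀ i X Y, ε i (X + Y) = ε i X + ε i Y
  ε_smul : ∀ i (f : A) X, ε i (f • X) = f * ε i X
  expand : ∀ X, X = ∑ i, ε i X • e i

/-- The Ricci curvature `Ric(Y,Z) = tr{X ↦ R(X,Y)Z}` computed in a frame. -/
def ricci {n : ℕ} (F : Frame A n) (C : Conn A) (Y Z : VF A) : A :=
  ∑ i, F.ε i (curv C (F.e i) Y Z)

/-- `τ_g(X) = tr K_X` computed in a frame. -/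
def tau {n : ℕ} (F : Frame A n) (K : VF A → VF A → VF A) (X : VF A) : A :=
  ∑ i, F.ε i (K X (F.e i))

/-- `(div^∇̂ K)(Y,Z)`, the trace of `V ↦ (∇̂_V K)(Y,Z)`, computed in a frame. -/
def divK {n : ℕ} (F : Frame A n) (h : Conn A) (K : VF A → VF A → VF A)
    (Y Z : VF A) : A :=
  ∑ i, F.ε i (covK h K (F.e i) Y Z)

/-- `(M,g,∇)` has constant curvature `k`. -/
def ConstCurv (gm : Metric A) (C : Conn A) (k : ℝ) : Prop :=
  ∀ X Y Z, curv C X Y Z = k • (gm.g Y Z • X - gm.g X Z • Y)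

/-- Projective flatness of a connection, via Eisenhart's characterization:
for `n = 2` total symmetry of `∇ Ric`, for `n ≥ 3` vanishing of the
projective curvature tensor. -/
def ProjFlat {n : ℕ} (F : Frame A n) (C : Conn A) : Prop :=
  (n = 2 ∧ TotSym3 (cov2 C (ricci F C))) ∨
    (3 ≤ n ∧ ∀ X Y Z, curv C X Y Z =
      ((n : ℝ) - 1)⁻¹ • (ricci F C Y Z • X - ricci F C X Z • Y))


section Aux

variable (gm : Metric A) (C : Conn A)

lemma D_neg_right (X Z : VF A) : C.D X (-Z) = - C.D X Z := by
  have h := C.leibniz (-1 : A) X Z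
  simpa [neg_one_smul, Derivation.map_one_eq_zero] using h

lemma D_neg_left (X Z : VF A) : C.D (-X) Z = - C.D X Z := by
  have h := C.smul_left (-1 : A) X Z
  simpa [neg_one_smul] using h

lemma D_sub_right (X Y Z : VF A) : C.D X (Y - Z) = C.D X Y - C.D X Z := by
  rw [sub_eq_add_neg, C.add_right, D_neg_right, ← sub_eq_add_neg]

lemma D_sub_left (X Y Z : VF A) : C.D (X - Y) Z = C.D X Z - C.D Y Z := by
  rw [sub_eq_add_neg, C.add_left, D_neg_left, ← sub_eq_add_neg]

lemma g_add_right (X Y Z : VF A) : gm.g X (Y + Z) = gm.g X Y + gm.g X Z := by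
  rw [gm.symm, gm.add_left, gm.symm Y X, gm.symm Z X]

lemma g_neg_left (X Y : VF A) : gm.g (-X) Y = - gm.g X Y := by
  have h := gm.smul_left (-1 : A) X Y
  simpa [neg_one_smul] using h

lemma g_neg_right (X Y : VF A) : gm.g X (-Y) = - gm.g X Y := by
  rw [gm.symm, g_neg_left, gm.symm Y X]

lemma g_sub_left (X Y Z : VF A) : gm.g (X - Y) Z = gm.g X Z - gm.g Y Z := by
  rw [sub_eq_add_neg, gm.add_left, g_neg_left, ← sub_eq_add_neg]

lemma g_sub_right (X Y Z : VF A) : gm.g X (Y - Z) = gm.g X Y - gm.g X Z := by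
  rw [sub_eq_add_neg, g_add_right, g_neg_right, ← sub_eq_add_neg]

lemma g_zero_left (Y : VF A) : gm.g 0 Y = 0 := by
  have h := gm.smul_left (0 : A) 0 Y
  simpa using h

/-- First Bianchi identity for a torsion-free connection. -/
lemma bianchi (hT : TorsionFree C) (X Y Z : VF A) :
    curv C X Y Z + curv C Y Z X + curv C Z X Y = 0 := by
  have key : curv C X Y Z + curv C Y Z X + curv C Z X Y
      = ⁅X, ⁅Y, Z⁆⁆ + ⁅Y, ⁅Z, X⁆⁆ + ⁅Z, ⁅X, Y⁆⁆ := by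
    rw [← hT X ⁅Y, Z⁆, ← hT Y ⁅Z, X⁆, ← hT Z ⁅X, Y⁆,
      ← hT X Y, ← hT Y Z, ← hT Z X]
    simp only [curv, ← hT X Y, ← hT Y Z, ← hT Z X,
      D_sub_left, D_sub_right]
    abel
  rw [key, lie_jacobi]

/-- Antisymmetry of the curvature in the first two slots. -/
lemma curv_antisymm (X Y Z : VF A) : curv C Y X Z = - curv C X Y Z := by
  have hb : ⁅Y, X⁆ = -⁅X, Y⁆ := by rw [← lie_skew]
  simp only [curv, hb, D_neg_left]
  abel

/-- Duality identity: `g(R(X,Y)Z, W) + g(Z, R*(X,Y)W) = 0`. -/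
lemma dual_curv (Cs : Conn A) (hdual : IsDual gm C Cs) (X Y Z W : VF A) :
    gm.g (curv C X Y Z) W + gm.g Z (curv Cs X Y W) = 0 := by
  have h1 : X (Y (gm.g Z W)) =
      gm.g (C.D X (C.D Y Z)) W + gm.g (C.D Y Z) (Cs.D X W)
      + (gm.g (C.D X Z) (Cs.D Y W) + gm.g Z (Cs.D X (Cs.D Y W))) := by
    rw [hdual Y Z W, map_add, hdual X (C.D Y Z) W, hdual X Z (Cs.D Y W)]
  have h2 : Y (X (gm.g Z W)) =
      gm.g (C.D Y (C.D X Z)) W + gm.g (C.D X Z) (Cs.D Y W)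
      + (gm.g (C.D Y Z) (Cs.D X W) + gm.g Z (Cs.D Y (Cs.D X W))) := by
    rw [hdual X Z W, map_add, hdual Y (C.D X Z) W, hdual Y Z (Cs.D X W)]
  have h3 : ⁅X, Y⁆ (gm.g Z W) =
      gm.g (C.D ⁅X, Y⁆ Z) W + gm.g Z (Cs.D ⁅X, Y⁆ W) := hdual _ _ _
  have h4 : ⁅X, Y⁆ (gm.g Z W) = X (Y (gm.g Z W)) - Y (X (gm.g Z W)) :=
    Derivation.commutator_apply ..
  simp only [curv, g_sub_left, g_sub_right]
  linear_combination h2 - h1 + h3 - h4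

/-- The pair symmetry follows algebraically from the other three symmetries. -/
lemma pair_symm_aux (s : VF A → VF A → VF A → VF A → A)
    (ha : ∀ X Y Z W, s X Y Z W + s Y Z X W + s Z X Y W = 0)
    (hb : ∀ X Y Z W, s X Y Z W = - s Y X Z W)
    (hc : ∀ X Y Z W, s X Y Z W = - s X Y W Z)
    (X Y Z W : VF A) : s X Y Z W + s X Y Z W = s Z W X Y + s Z W X Y := by
  linear_combination ha X Y Z W + ha Y Z W X - ha Z W X Y - ha W X Y Z
    + hc X Y Z W - hc Y Z X W - hc Z W X Y
    + hb X Z W Y - hc Z X W Y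
    - hb W Y Z X + hc Y W Z X
    + hc W X Z Y

end Aux

/-- the statistical curvature tensor `S = (R + R*)/2` satisfies
all four Riemannian curvature symmetries. -/
theorem stmt11 (gm : Metric A) (C Cs : Conn A)
    (hstat : IsStatistical gm C) (hTs : TorsionFree Cs)
    (hdual : IsDual gm C Cs) :
    let S : VF A → VF A → VF A → VF A → A := fun X Y Z W =>
      ((1 : ℝ)/2) • (gm.g (curv C X Y Z) W + gm.g (curv Cs X Y Z) W)
    (∀ X Y Z W, S X Y Z W + S Y Z X W + S Z X Y W = 0) ∧
      (∀ X Y Z W, S X Y Z W = - S Y X Z W) ∧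
      (∀ X Y Z W, S X Y Z W = - S X Y W Z) ∧
      (∀ X Y Z W, S X Y Z W = S Z W X Y) := by
  intro S
  have hTc : TorsionFree C := hstat.1
  have hdual' : IsDual gm Cs C := by
    intro X Y Z
    rw [gm.symm Y Z]
    linear_combination hdual X Z Y + gm.symm (C.D X Z) Y + gm.symm Z (Cs.D X Y)
  have hS : ∀ X Y Z W, S X Y Z W
      = ((1:ℝ)/2) • (gm.g (curv C X Y Z) W + gm.g (curv Cs X Y Z) W) :=
    fun _ _ _ _ => rfl
  have ha : ∀ X Y Z W : VF A,
      (gm.g (curv C X Y Z) W + gm.g (curv Cs X Y Z) W)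
      + (gm.g (curv C Y Z X) W + gm.g (curv Cs Y Z X) W)
      + (gm.g (curv C Z X Y) W + gm.g (curv Cs Z X Y) W) = 0 := by
    intro X Y Z W
    have e1 : gm.g (curv C X Y Z) W + gm.g (curv C Y Z X) W
        + gm.g (curv C Z X Y) W = 0 := by
      rw [← gm.add_left, ← gm.add_left, bianchi C hTc, g_zero_left]
    have e2 : gm.g (curv Cs X Y Z) W + gm.g (curv Cs Y Z X) W
        + gm.g (curv Cs Z X Y) W = 0 := by
      rw [← gm.add_left, ← gm.add_left, bianchi Cs hTs, g_zero_left]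
    linear_combination e1 + e2
  have hb : ∀ X Y Z W : VF A,
      gm.g (curv C X Y Z) W + gm.g (curv Cs X Y Z) W
      = -(gm.g (curv C Y X Z) W + gm.g (curv Cs Y X Z) W) := by
    intro X Y Z W
    rw [curv_antisymm C X Y Z, curv_antisymm Cs X Y Z, g_neg_left, g_neg_left]
    ring
  have hc : ∀ X Y Z W : VF A,
      gm.g (curv C X Y Z) W + gm.g (curv Cs X Y Z) W
      = -(gm.g (curv C X Y W) Z + gm.g (curv Cs X Y W) Z) := by
    intro X Y Z W
    have d1 := dual_curv gm C Cs hdual X Y Z W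
    have d2 := dual_curv gm Cs C hdual' X Y Z W
    linear_combination d1 + d2 - gm.symm Z (curv Cs X Y W)
      - gm.symm Z (curv C X Y W)
  have hd := pair_symm_aux
    (fun X Y Z W => gm.g (curv C X Y Z) W + gm.g (curv Cs X Y Z) W) ha hb hc
  have two : ∀ a : A, ((1:ℝ)/4) • (a + a) = ((1:ℝ)/2) • a := by
    intro a
    rw [smul_add, ← add_smul]
    norm_num
  refine ⟨fun X Y Z W => ?_, fun X Y Z W => ?_, fun X Y Z W => ?_,
    fun X Y Z W => ?_⟩
  · rw [hS, hS, hS, ← smul_add, ← smul_add, ha, smul_zero]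
  · rw [hS, hS, hb X Y Z W, smul_neg]
  · rw [hS, hS, hc X Y Z W, smul_neg]
  · rw [hS, hS, ← two, ← two, hd X Y Z W]

end StatMfd
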